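/- arXiv:1906.07593 — 2 statements merged into one kernel-verified Lean document; each statement's English description precedes it below -/
import Mathlib

section
/- Let Ω ⊂ ℝⁿ be a bounded measurable set, let Φ : ℝⁿ → [0,∞) be an n-dimensional N-function of class C¹ with Young conjugate Φ_•, and let U : Ω → ℝⁿ be measurable with ∫_Ω Φ(U(x)) dx < ∞. Then for every ε ∈ (0,1] one has ∫_Ω Φ_•(∇Φ((1−ε)U(x))) dx < ∞. -/
open MeasureTheory Filter Topology
open scoped RealInnerProductSpace ENNReal

/-- An `n`-dimensional (finite-valued) Young function: an even, convex function
`Φ : ℝⁿ → [0,∞)` with `Φ(0) = 0` such that for every `t > 0` the sublevel set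
`{ξ : Φ ξ < t}` is bounded and is a neighborhood of `0`. -/
structure IsYoungFunction {n : ℕ} (Φ : EuclideanSpace ℝ (Fin n) → ℝ) : Prop where
  nonneg : ∀ ξ, 0 ≤ Φ ξ
  even : ∀ ξ, Φ (-ξ) = Φ ξ
  convex : ConvexOn ℝ Set.univ Φ
  map_zero : Φ 0 = 0
  sublevel_bounded : ∀ t > 0, Bornology.IsBounded {ξ | Φ ξ < t}
  sublevel_mem_nhds : ∀ t > 0, {ξ | Φ ξ < t} ∈ 𝓝 (0 : EuclideanSpace ℝ (Fin n))

/-- An `n`-dimensional `N`-function: a finite-valued Young function vanishing only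
at `0`, with `Φ(ξ)/|ξ| → ∞` as `|ξ| → ∞` and `Φ(ξ)/|ξ| → 0` as `|ξ| → 0`. -/
structure IsNFunction {n : ℕ} (Φ : EuclideanSpace ℝ (Fin n) → ℝ)
    extends IsYoungFunction Φ : Prop where
  eq_zero : ∀ ξ, Φ ξ = 0 → ξ = 0
  tendsto_atTop : Tendsto (fun ξ => Φ ξ / ‖ξ‖)
    (Bornology.cobounded (EuclideanSpace ℝ (Fin n))) atTop
  tendsto_zero : Tendsto (fun ξ => Φ ξ / ‖ξ‖)
    (𝓝[≠] (0 : EuclideanSpace ℝ (Fin n))) (𝓝 0)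

/-- The Young conjugate `Φ_•(η) = sup_ξ (ξ·η − Φ(ξ))`, with values in `[0,∞]`
(the supremum is always nonnegative, since `ξ = 0` contributes `0`). -/
noncomputable def youngConj {n : ℕ} (Φ : EuclideanSpace ℝ (Fin n) → ℝ)
    (η : EuclideanSpace ℝ (Fin n)) : ℝ≥0∞ :=
  ⨆ ξ : EuclideanSpace ℝ (Fin n), ENNReal.ofReal (⟪ξ, η⟫ - Φ ξ)

/-!
For a differentiable convex `Φ` the supremum defining `Φ_•(∇Φ(η))` is attained
at `ξ = η`, so `Φ_•(∇Φ(η)) = ⟪η, ∇Φ(η)⟫ - Φ(η)`. With `η = (1-ε)ξ`, the gradient inequality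
between `η` and `ξ` reads `ε ⟪∇Φ(η), ξ⟫ ≤ Φ(ξ) - Φ(η)`, whence
`Φ_•(∇Φ((1-ε)ξ)) ≤ ((1-ε)/ε) Φ(ξ)`: the integrand is dominated by a multiple of `Φ(U)`.
-/

theorem ConvexOn.hasFDerivAt_apply_sub_le {E : Type*} [NormedAddCommGroup E] [NormedSpace ℝ E]
    {f : E → ℝ} {f' : E →L[ℝ] ℝ} {x : E} (hf : ConvexOn ℝ Set.univ f)
    (hf' : HasFDerivAt f f' x) (y : E) :
    f' (y - x) ≤ f y - f x := by
  let c : ℝ →ᵃ[ℝ] E := AffineMap.lineMap x y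
  have hfc : ConvexOn ℝ Set.univ (f ∘ c) := by simpa using hf.comp_affineMap c
  have hc0 : c 0 = x := AffineMap.lineMap_apply_zero x y
  have hderiv : HasDerivAt (f ∘ c) (f' (y - x)) 0 := by
    rw [← hc0] at hf'
    exact hf'.comp_hasDerivAt 0 AffineMap.hasDerivAt_lineMap
  simpa [slope_def_field, c] using
    hfc.le_slope_of_hasDerivAt (Set.mem_univ 0) (Set.mem_univ 1) one_pos hderiv

section Gradient

variable {E : Type*} [NormedAddCommGroup E] [InnerProductSpace ℝ E] [CompleteSpace E]
  {f : E → ℝ}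

theorem ConvexOn.inner_gradient_sub_le (hf : ConvexOn ℝ Set.univ f) {x : E}
    (hx : DifferentiableAt ℝ f x) (y : E) :
    ⟪gradient f x, y - x⟫ ≤ f y - f x := by
  simpa [gradient, InnerProductSpace.toDual_symm_apply] using
    hf.hasFDerivAt_apply_sub_le hx.hasFDerivAt y

theorem ConvexOn.inner_smul_gradient_sub_le (hf : ConvexOn ℝ Set.univ f)
    (hf₀ : ∀ ξ, 0 ≤ f ξ) {ε : ℝ} (hε₀ : 0 < ε) (hε₁ : ε ≤ 1) (ξ : E)
    (hξ : DifferentiableAt ℝ f ((1 - ε) • ξ)) :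
    ⟪(1 - ε) • ξ, gradient f ((1 - ε) • ξ)⟫ - f ((1 - ε) • ξ) ≤ (1 - ε) / ε * f ξ := by
  set η := (1 - ε) • ξ
  set g := gradient f η
  have hgap : ξ - η = ε • ξ := by simp only [η, sub_smul, one_smul, sub_sub_cancel]
  have hineq : ε * ⟪g, ξ⟫ ≤ f ξ - f η := by
    simpa only [hgap, real_inner_smul_right] using hf.inner_gradient_sub_le hξ ξ
  have hη : ⟪η, g⟫ = (1 - ε) * ⟪g, ξ⟫ := by
    rw [real_inner_comm, real_inner_smul_right]
  have hfη := hf₀ η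
  rw [hη, div_mul_eq_mul_div, le_div_iff₀ hε₀]
  nlinarith [mul_le_mul_of_nonneg_left hineq (sub_nonneg.2 hε₁)]

end Gradient

section YoungConj

variable {n : ℕ} {Φ : EuclideanSpace ℝ (Fin n) → ℝ}

theorem youngConj_gradient_le (hΦ : ConvexOn ℝ Set.univ Φ) {η : EuclideanSpace ℝ (Fin n)}
    (hη : DifferentiableAt ℝ Φ η) :
    youngConj Φ (gradient Φ η) ≤ ENNReal.ofReal (⟪η, gradient Φ η⟫ - Φ η) := by
  refine iSup_le fun ξ => ENNReal.ofReal_le_ofReal ?_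
  have h := hΦ.inner_gradient_sub_le hη ξ
  rw [inner_sub_right, real_inner_comm ξ, real_inner_comm η] at h
  linarith

theorem youngConj_gradient_smul_le (hΦ : ConvexOn ℝ Set.univ Φ) (hΦ₀ : ∀ ξ, 0 ≤ Φ ξ)
    (hd : Differentiable ℝ Φ) {ε : ℝ} (hε₀ : 0 < ε) (hε₁ : ε ≤ 1)
    (ξ : EuclideanSpace ℝ (Fin n)) :
    youngConj Φ (gradient Φ ((1 - ε) • ξ)) ≤
      ENNReal.ofReal ((1 - ε) / ε) * ENNReal.ofReal (Φ ξ) := by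
  rw [← ENNReal.ofReal_mul (div_nonneg (sub_nonneg.2 hε₁) hε₀.le)]
  exact (youngConj_gradient_le hΦ (hd _)).trans
    (ENNReal.ofReal_le_ofReal (hΦ.inner_smul_gradient_sub_le hΦ₀ hε₀ hε₁ ξ (hd _)))

end YoungConj

theorem conj_gradient_scaled_integrable_general {n : ℕ}
    (Ω : Set (EuclideanSpace ℝ (Fin n)))
    (Φ : EuclideanSpace ℝ (Fin n) → ℝ) (hΦ : IsNFunction Φ)
    (hC1 : ContDiff ℝ 1 Φ)
    (U : EuclideanSpace ℝ (Fin n) → EuclideanSpace ℝ (Fin n))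
    (hUΦ : ∫⁻ x in Ω, ENNReal.ofReal (Φ (U x)) < ⊤)
    (ε : ℝ) (hε : ε ∈ Set.Ioc (0 : ℝ) 1) :
    ∫⁻ x in Ω, youngConj Φ (gradient Φ ((1 - ε) • U x)) < ⊤ := by
  obtain ⟨hε₀, hε₁⟩ := hε
  have hd : Differentiable ℝ Φ := hC1.differentiable one_ne_zero
  calc ∫⁻ x in Ω, youngConj Φ (gradient Φ ((1 - ε) • U x))
      ≤ ∫⁻ x in Ω, ENNReal.ofReal ((1 - ε) / ε) * ENNReal.ofReal (Φ (U x)) :=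
        lintegral_mono fun x =>
          youngConj_gradient_smul_le hΦ.convex hΦ.nonneg hd hε₀ hε₁ (U x)
    _ = ENNReal.ofReal ((1 - ε) / ε) * ∫⁻ x in Ω, ENNReal.ofReal (Φ (U x)) :=
        lintegral_const_mul' _ _ ENNReal.ofReal_ne_top
    _ < ⊤ := ENNReal.mul_lt_top ENNReal.ofReal_lt_top hUΦ

/-- If `Φ` is a `C¹` `n`-dimensional `N`-function and `U` belongs to the Orlicz
class (`∫_Ω Φ(U) dx < ∞`) on a bounded measurable set `Ω`, then for every
`ε ∈ (0,1]` one has `∫_Ω Φ_•(∇Φ((1−ε)U)) dx < ∞`. -/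
theorem conj_gradient_scaled_integrable {n : ℕ}
    (Ω : Set (EuclideanSpace ℝ (Fin n))) (hΩm : MeasurableSet Ω)
    (hΩb : Bornology.IsBounded Ω)
    (Φ : EuclideanSpace ℝ (Fin n) → ℝ) (hΦ : IsNFunction Φ)
    (hC1 : ContDiff ℝ 1 Φ)
    (U : EuclideanSpace ℝ (Fin n) → EuclideanSpace ℝ (Fin n))
    (hU : Measurable U)
    (hUΦ : ∫⁻ x in Ω, ENNReal.ofReal (Φ (U x)) < ⊤)
    (ε : ℝ) (hε : ε ∈ Set.Ioc (0 : ℝ) 1) :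
    ∫⁻ x in Ω, youngConj Φ (gradient Φ ((1 - ε) • U x)) < ⊤ :=
  conj_gradient_scaled_integrable_general Ω Φ hΦ hC1 U hUΦ ε hε
end

section
/- Let Ω ⊂ ℝⁿ be a bounded measurable set and let Φ : ℝⁿ → [0,∞) be a differentiable n-dimensional N-function with Young conjugate Φ_•. Let V_h, V : Ω → ℝⁿ be measurable functions such that each V_h satisfies ∫_Ω Φ(V_h/k_h) dx < ∞ for some k_h > 0, V satisfies ∫_Ω Φ(V/k) dx < ∞ for some k > 0, and such that ∫_Ω V_h · W dx → ∫_Ω V · W dx for every measurable essentially bounded W : Ω → ℝⁿ. Then ∫_Ω Φ(V) dx ≤ liminf_{h→∞} ∫_Ω Φ(V_h) dx (as an inequality in [0, +∞]). -/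
open MeasureTheory Filter Topology
open scoped RealInnerProductSpace ENNReal

/-!
For bounded measurable `W`, convexity gives the pointwise affine minorant
`Φ (V h) ≥ Φ W + ⟪∇Φ W, V h - W⟫`, and `∇Φ ∘ W` is a bounded test field, so integrating and
passing to the limit yields `∫ Φ W ≤ liminf ∫ Φ (V h)` as soon as `∫ ⟪V, ∇Φ W⟫ = ∫ ⟪W, ∇Φ W⟫`.
This holds for the truncation `W` of `V` to `{‖V‖ ≤ R}`, because `∇Φ 0 = 0`; monotone convergence
in `R` concludes. Superlinear growth of `Φ` makes `V h` integrable whenever `∫ Φ (V h) < ∞`, the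
only case in which there is something to prove.
-/

open Set InnerProductSpace
open scoped Gradient

section Convex

variable {E : Type*} [NormedAddCommGroup E] [NormedSpace ℝ E] {f : E → ℝ} {x : E}

theorem ConvexOn.add_fderiv_sub_le (hf : ConvexOn ℝ univ f) (hd : DifferentiableAt ℝ f x)
    (y : E) : f x + fderiv ℝ f x (y - x) ≤ f y := by
  have hline : ConvexOn ℝ univ (f ∘ AffineMap.lineMap (k := ℝ) x y) := by
    simpa using hf.comp_affineMap (AffineMap.lineMap x y)
  have hderiv : HasDerivAt (f ∘ AffineMap.lineMap (k := ℝ) x y) (fderiv ℝ f x (y - x)) 0 :=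
    hd.hasFDerivAt.comp_hasDerivAt_of_eq 0 AffineMap.hasDerivAt_lineMap
      (AffineMap.lineMap_apply_zero x y).symm
  have hslope := hline.le_slope_of_hasDerivAt (mem_univ 0) (mem_univ 1) one_pos hderiv
  simp only [slope, AffineMap.lineMap_apply_zero, AffineMap.lineMap_apply_one, Function.comp_apply,
    sub_zero, inv_one, one_smul, vsub_eq_sub] at hslope
  linarith

theorem ConvexOn.norm_fderiv_le (hf : ConvexOn ℝ univ f) (hd : DifferentiableAt ℝ f x) {C : ℝ}
    (hC : ∀ y ∈ Metric.closedBall x 1, f y ≤ C) : ‖fderiv ℝ f x‖ ≤ C - f x := by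
  have hdir : ∀ w : E, ‖w‖ = 1 → fderiv ℝ f x w ≤ C - f x := fun w hw => by
    have hsub := hf.add_fderiv_sub_le hd (x + w)
    rw [add_sub_cancel_left] at hsub
    linarith [hC (x + w) (by simp [hw])]
  refine ContinuousLinearMap.opNorm_le_of_unit_norm
    (sub_nonneg.2 (hC x (Metric.mem_closedBall_self zero_le_one)))
    fun w hw => abs_le.2 ⟨?_, hdir w hw⟩
  have hneg := hdir (-w) (by rwa [norm_neg])
  rw [map_neg] at hneg
  linarith

end Convex

theorem exists_norm_le_add_of_tendsto_div_norm {E : Type*} [SeminormedAddCommGroup E]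
    {f : E → ℝ} (hf0 : ∀ ξ, 0 ≤ f ξ)
    (hf : Tendsto (fun ξ => f ξ / ‖ξ‖) (Bornology.cobounded E) atTop) :
    ∃ s, ∀ ξ, ‖ξ‖ ≤ s + f ξ := by
  obtain ⟨r, -, hr⟩ :=
    (Metric.hasBasis_cobounded_compl_closedBall 0).eventually_iff.1 (hf.eventually_ge_atTop 1)
  refine ⟨max r 0, fun ξ => ?_⟩
  rcases le_or_gt ‖ξ‖ (max r 0) with hξ | hξ
  · linarith [hf0 ξ]
  · have hpos : 0 < ‖ξ‖ := (le_max_right r 0).trans_lt hξ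
    have := (one_le_div hpos).1 (hr (by simpa using (le_max_left r 0).trans_lt hξ))
    linarith [le_max_right r 0]

theorem ofReal_integral_le_lintegral_ofReal {α : Type*} [MeasurableSpace α] {μ : Measure α}
    (u : α → ℝ) : ENNReal.ofReal (∫ x, u x ∂μ) ≤ ∫⁻ x, ENNReal.ofReal (u x) ∂μ := by
  by_cases hu : Integrable u μ
  · rw [integral_eq_lintegral_pos_part_sub_lintegral_neg_part hu]
    exact (ENNReal.ofReal_le_ofReal (sub_le_self _ ENNReal.toReal_nonneg)).trans
      ENNReal.ofReal_toReal_le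
  · simp [integral_undef hu]

section Integral

variable {α E : Type*} [MeasurableSpace α] {μ : Measure α} [NormedAddCommGroup E]
  {f : E → ℝ} {s : ℝ}

theorem integrable_of_norm_le_add_of_lintegral_ne_top [IsFiniteMeasure μ]
    (hgrow : ∀ ξ, ‖ξ‖ ≤ s + f ξ) {U : α → E} (hU : AEStronglyMeasurable U μ)
    (hfin : ∫⁻ x, ENNReal.ofReal (f (U x)) ∂μ ≠ ⊤) : Integrable U μ := by
  refine ⟨hU, (hasFiniteIntegral_iff_norm U).2 ?_⟩
  calc ∫⁻ x, ENNReal.ofReal ‖U x‖ ∂μ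
      ≤ ∫⁻ x, ENNReal.ofReal s + ENNReal.ofReal (f (U x)) ∂μ :=
        lintegral_mono fun x => (ENNReal.ofReal_le_ofReal (hgrow _)).trans ENNReal.ofReal_add_le
    _ = ENNReal.ofReal s * μ univ + ∫⁻ x, ENNReal.ofReal (f (U x)) ∂μ := by
        rw [lintegral_add_left measurable_const, lintegral_const]
    _ < ⊤ := by finiteness

variable [InnerProductSpace ℝ E]

theorem MeasureTheory.Integrable.inner_of_norm_le {U G : α → E} (hU : Integrable U μ)
    (hG : AEStronglyMeasurable G μ) {M : ℝ} (hGb : ∀ x, ‖G x‖ ≤ M) :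
    Integrable (fun x => ⟪U x, G x⟫) μ :=
  (hU.norm.mul_const M).mono' (hU.1.inner hG) (ae_of_all _ fun x =>
    (norm_inner_le_norm _ _).trans (mul_le_mul_of_nonneg_left (hGb x) (norm_nonneg _)))

theorem ofReal_integral_add_integral_inner_le_lintegral [IsFiniteMeasure μ]
    (hgrow : ∀ ξ, ‖ξ‖ ≤ s + f ξ) {U G : α → E} (hU : AEStronglyMeasurable U μ)
    (hG : AEStronglyMeasurable G μ) {M : ℝ} (hGb : ∀ x, ‖G x‖ ≤ M) {a : α → ℝ} (ha : Integrable a μ)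
    (hminor : ∀ x, a x + ⟪U x, G x⟫ ≤ f (U x)) :
    ENNReal.ofReal (∫ x, a x ∂μ + ∫ x, ⟪U x, G x⟫ ∂μ) ≤ ∫⁻ x, ENNReal.ofReal (f (U x)) ∂μ := by
  by_cases hfin : ∫⁻ x, ENNReal.ofReal (f (U x)) ∂μ = ⊤
  · simp [hfin]
  have hUG :=
    (integrable_of_norm_le_add_of_lintegral_ne_top hgrow hU hfin).inner_of_norm_le hG hGb
  rw [← integral_add ha hUG]
  exact (ofReal_integral_le_lintegral_ofReal _).trans
    (lintegral_mono fun x => ENNReal.ofReal_le_ofReal (hminor x))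

theorem ofReal_integral_add_le_liminf_lintegral [IsFiniteMeasure μ]
    (hgrow : ∀ ξ, ‖ξ‖ ≤ s + f ξ) {V : ℕ → α → E} (hV : ∀ h, AEStronglyMeasurable (V h) μ)
    {G : α → E} (hG : AEStronglyMeasurable G μ) {M : ℝ} (hGb : ∀ x, ‖G x‖ ≤ M) {a : α → ℝ}
    (ha : Integrable a μ) (hminor : ∀ h x, a x + ⟪V h x, G x⟫ ≤ f (V h x)) {L : ℝ}
    (hlim : Tendsto (fun h => ∫ x, ⟪V h x, G x⟫ ∂μ) atTop (𝓝 L)) :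
    ENNReal.ofReal (∫ x, a x ∂μ + L) ≤
      liminf (fun h => ∫⁻ x, ENNReal.ofReal (f (V h x)) ∂μ) atTop := by
  have hlim' := (ENNReal.continuous_ofReal.tendsto _).comp
    ((tendsto_const_nhds (x := ∫ x, a x ∂μ)).add hlim)
  rw [← hlim'.liminf_eq]
  exact liminf_le_liminf (Eventually.of_forall fun h =>
    ofReal_integral_add_integral_inner_le_lintegral hgrow (hV h) hG hGb ha (hminor h))

end Integral

section Gradient

variable {E : Type*} [NormedAddCommGroup E] [InnerProductSpace ℝ E] [CompleteSpace E]
  {Φ : E → ℝ}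

theorem IsLocalMin.gradient_eq_zero {x : E} (h : IsLocalMin Φ x) : ∇ Φ x = 0 := by
  rw [gradient, h.fderiv_eq_zero, map_zero]

theorem measurable_gradient [MeasurableSpace E] [BorelSpace E] : Measurable (∇ Φ) :=
  (toDual ℝ E).symm.continuous.measurable.comp (measurable_fderiv ℝ Φ)

theorem ConvexOn.exists_norm_gradient_le [ProperSpace E] (hconv : ConvexOn ℝ univ Φ)
    (hd : Differentiable ℝ Φ) (R : ℝ) : ∃ M, ∀ ξ, ‖ξ‖ ≤ R → ‖∇ Φ ξ‖ ≤ M := by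
  obtain ⟨C, hC⟩ := (isCompact_closedBall (0 : E) (R + 1)).exists_bound_of_continuousOn
    hd.continuous.continuousOn
  refine ⟨C + C, fun ξ hξ => ?_⟩
  have hball : ∀ y ∈ Metric.closedBall ξ 1, |Φ y| ≤ C := fun y hy =>
    hC y (Metric.closedBall_subset_closedBall' (by simpa [add_comm] using hξ) hy)
  rw [gradient, LinearIsometryEquiv.norm_map]
  have hfd := hconv.norm_fderiv_le (hd ξ) fun y hy => (le_abs_self _).trans (hball y hy)
  linarith [neg_abs_le (Φ ξ), hball ξ (Metric.mem_closedBall_self zero_le_one)]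

end Gradient

section LowerSemicontinuity

variable {α E : Type*} [MeasurableSpace α] {μ : Measure α} [IsFiniteMeasure μ]
  [NormedAddCommGroup E] [InnerProductSpace ℝ E] [FiniteDimensional ℝ E]
  [MeasurableSpace E] [BorelSpace E] {Φ : E → ℝ} {V : ℕ → α → E}

theorem lintegral_le_liminf_of_tendsto_integral_inner_gradient (hconv : ConvexOn ℝ univ Φ)
    (hd : Differentiable ℝ Φ) (hnonneg : ∀ ξ, 0 ≤ Φ ξ) {s : ℝ} (hgrow : ∀ ξ, ‖ξ‖ ≤ s + Φ ξ)
    (hV : ∀ h, AEStronglyMeasurable (V h) μ) {W : α → E} (hW : Measurable W) {R : ℝ}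
    (hWb : ∀ x, ‖W x‖ ≤ R)
    (hlim : Tendsto (fun h => ∫ x, ⟪V h x, ∇ Φ (W x)⟫ ∂μ) atTop
      (𝓝 (∫ x, ⟪W x, ∇ Φ (W x)⟫ ∂μ))) :
    ∫⁻ x, ENNReal.ofReal (Φ (W x)) ∂μ ≤
      liminf (fun h => ∫⁻ x, ENNReal.ofReal (Φ (V h x)) ∂μ) atTop := by
  obtain ⟨M, hM⟩ := hconv.exists_norm_gradient_le hd R
  obtain ⟨C, hC⟩ := (isCompact_closedBall (0 : E) R).exists_bound_of_continuousOn
    hd.continuous.continuousOn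
  have hG : Measurable fun x => ∇ Φ (W x) := measurable_gradient.comp hW
  have hΦW : Integrable (fun x => Φ (W x)) μ :=
    .of_bound (hd.continuous.measurable.comp hW).aestronglyMeasurable C
      (ae_of_all _ fun x => hC _ (by simpa using hWb x))
  have hWG : Integrable (fun x => ⟪W x, ∇ Φ (W x)⟫) μ :=
    (Integrable.of_bound hW.aestronglyMeasurable R (ae_of_all _ hWb)).inner_of_norm_le
      hG.aestronglyMeasurable fun x => hM _ (hWb x)
  have hminor : ∀ h x, (Φ (W x) - ⟪W x, ∇ Φ (W x)⟫) + ⟪V h x, ∇ Φ (W x)⟫ ≤ Φ (V h x) :=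
    fun h x => by
      have hsub := hconv.add_fderiv_sub_le (hd (W x)) (V h x)
      rw [← inner_gradient_left, inner_sub_right, real_inner_comm (W x),
        real_inner_comm (V h x)] at hsub
      linarith
  have hkey := ofReal_integral_add_le_liminf_lintegral hgrow hV hG.aestronglyMeasurable
    (fun x => hM _ (hWb x)) (a := fun x => Φ (W x) - ⟪W x, ∇ Φ (W x)⟫) (hΦW.sub hWG) hminor hlim
  rwa [integral_sub hΦW hWG, sub_add_cancel,
    ofReal_integral_eq_lintegral_ofReal hΦW (ae_of_all _ fun x => hnonneg _)] at hkey

theorem lintegral_le_liminf_of_forall_tendsto_integral_inner (hconv : ConvexOn ℝ univ Φ)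
    (hd : Differentiable ℝ Φ) (hnonneg : ∀ ξ, 0 ≤ Φ ξ) (hzero : Φ 0 = 0)
    (hsuper : Tendsto (fun ξ => Φ ξ / ‖ξ‖) (Bornology.cobounded E) atTop)
    (hV : ∀ h, Measurable (V h)) {Vlim : α → E} (hVlim : Measurable Vlim)
    (hweak : ∀ W : α → E, Measurable W → (∃ C : ℝ, ∀ᵐ x ∂μ, ‖W x‖ ≤ C) →
      Tendsto (fun h => ∫ x, ⟪V h x, W x⟫ ∂μ) atTop (𝓝 (∫ x, ⟪Vlim x, W x⟫ ∂μ))) :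
    ∫⁻ x, ENNReal.ofReal (Φ (Vlim x)) ∂μ ≤
      liminf (fun h => ∫⁻ x, ENNReal.ofReal (Φ (V h x)) ∂μ) atTop := by
  obtain ⟨s, hgrow⟩ := exists_norm_le_add_of_tendsto_div_norm hnonneg hsuper
  have hgrad0 : ∇ Φ 0 = 0 :=
    IsLocalMin.gradient_eq_zero (Eventually.of_forall fun ξ => hzero ▸ hnonneg ξ)
  set S : ℕ → Set α := fun R => {x | ‖Vlim x‖ ≤ R}
  have hS : ∀ R, MeasurableSet (S R) := fun R => measurableSet_le hVlim.norm measurable_const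
  have htrunc : ∀ R : ℕ, ∫⁻ x in S R, ENNReal.ofReal (Φ (Vlim x)) ∂μ ≤
      liminf (fun h => ∫⁻ x, ENNReal.ofReal (Φ (V h x)) ∂μ) atTop := by
    intro R
    set W := (S R).indicator Vlim with hWdef
    have hW : Measurable W := hVlim.indicator (hS R)
    have hWb : ∀ x, ‖W x‖ ≤ R := fun x => by
      by_cases hx : x ∈ S R
      · rw [hWdef, indicator_of_mem hx]
        exact hx
      · simp [hWdef, hx]
    have hinner : ∀ x, ⟪Vlim x, ∇ Φ (W x)⟫ = ⟪W x, ∇ Φ (W x)⟫ := fun x => by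
      by_cases hx : x ∈ S R <;> simp [hWdef, hx, hgrad0]
    obtain ⟨M, hM⟩ := hconv.exists_norm_gradient_le hd R
    have hlim := hweak _ (measurable_gradient.comp hW) ⟨M, ae_of_all _ fun x => hM _ (hWb x)⟩
    simp only [Function.comp_apply, hinner] at hlim
    have hcomp : (fun x => ENNReal.ofReal (Φ (W x))) =
        (S R).indicator fun x => ENNReal.ofReal (Φ (Vlim x)) := by
      funext x
      by_cases hx : x ∈ S R <;> simp [hWdef, hx, hzero]
    rw [← lintegral_indicator (hS R), ← hcomp]
    exact lintegral_le_liminf_of_tendsto_integral_inner_gradient hconv hd hnonneg hgrow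
      (fun h => (hV h).aestronglyMeasurable) hW hWb hlim
  have hcover : ⋃ R : ℕ, S R = univ := iUnion_eq_univ_iff.2 fun x => exists_nat_ge ‖Vlim x‖
  calc ∫⁻ x, ENNReal.ofReal (Φ (Vlim x)) ∂μ
      = ∫⁻ x in ⋃ R : ℕ, S R, ENNReal.ofReal (Φ (Vlim x)) ∂μ := by
        rw [hcover, Measure.restrict_univ]
    _ = ⨆ R : ℕ, ∫⁻ x in S R, ENNReal.ofReal (Φ (Vlim x)) ∂μ :=
        setLIntegral_iUnion_of_directed _ (Monotone.directed_le
          fun R R' hR x (hx : ‖Vlim x‖ ≤ R) => (hx.trans (Nat.cast_le.2 hR) : ‖Vlim x‖ ≤ R'))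
    _ ≤ _ := iSup_le htrunc

end LowerSemicontinuity

theorem lintegral_liminf_of_weak_convergence_general {n : ℕ}
    (Ω : Set (EuclideanSpace ℝ (Fin n)))
    (hΩb : Bornology.IsBounded Ω)
    (Φ : EuclideanSpace ℝ (Fin n) → ℝ) (hΦ : IsNFunction Φ)
    (hdiff : Differentiable ℝ Φ)
    (V : ℕ → EuclideanSpace ℝ (Fin n) → EuclideanSpace ℝ (Fin n))
    (Vlim : EuclideanSpace ℝ (Fin n) → EuclideanSpace ℝ (Fin n))
    (hV : ∀ h, Measurable (V h)) (hVlim : Measurable Vlim)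
    (hweak : ∀ W : EuclideanSpace ℝ (Fin n) → EuclideanSpace ℝ (Fin n),
      Measurable W → (∃ C : ℝ, ∀ᵐ x ∂(volume.restrict Ω), ‖W x‖ ≤ C) →
      Tendsto (fun h => ∫ x in Ω, ⟪V h x, W x⟫) atTop
        (𝓝 (∫ x in Ω, ⟪Vlim x, W x⟫))) :
    ∫⁻ x in Ω, ENNReal.ofReal (Φ (Vlim x)) ≤
      liminf (fun h => ∫⁻ x in Ω, ENNReal.ofReal (Φ (V h x))) atTop := by
  have : IsFiniteMeasure (volume.restrict Ω) := ⟨by simpa using hΩb.measure_lt_top⟩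
  exact lintegral_le_liminf_of_forall_tendsto_integral_inner hΦ.convex hdiff hΦ.nonneg
    hΦ.map_zero hΦ.tendsto_atTop hV hVlim hweak

/-- Lower semicontinuity of `V ↦ ∫_Ω Φ(V) dx` with respect to weak convergence
against measurable essentially bounded functions: if each `V_h` and `V` belong
to the anisotropic Orlicz space on a bounded measurable set `Ω`, and
`∫_Ω V_h · W dx → ∫_Ω V · W dx` for every measurable essentially bounded `W`,
then `∫_Ω Φ(V) dx ≤ liminf_h ∫_Ω Φ(V_h) dx` in `[0,∞]`. -/
theorem lintegral_liminf_of_weak_convergence {n : ℕ}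
    (Ω : Set (EuclideanSpace ℝ (Fin n))) (hΩm : MeasurableSet Ω)
    (hΩb : Bornology.IsBounded Ω)
    (Φ : EuclideanSpace ℝ (Fin n) → ℝ) (hΦ : IsNFunction Φ)
    (hdiff : Differentiable ℝ Φ)
    (V : ℕ → EuclideanSpace ℝ (Fin n) → EuclideanSpace ℝ (Fin n))
    (Vlim : EuclideanSpace ℝ (Fin n) → EuclideanSpace ℝ (Fin n))
    (hV : ∀ h, Measurable (V h)) (hVlim : Measurable Vlim)
    (hVorl : ∀ h, ∃ k : ℝ, 0 < k ∧
      ∫⁻ x in Ω, ENNReal.ofReal (Φ (k⁻¹ • V h x)) < ⊤)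
    (hVlimorl : ∃ k : ℝ, 0 < k ∧
      ∫⁻ x in Ω, ENNReal.ofReal (Φ (k⁻¹ • Vlim x)) < ⊤)
    (hweak : ∀ W : EuclideanSpace ℝ (Fin n) → EuclideanSpace ℝ (Fin n),
      Measurable W → (∃ C : ℝ, ∀ᵐ x ∂(volume.restrict Ω), ‖W x‖ ≤ C) →
      Tendsto (fun h => ∫ x in Ω, ⟪V h x, W x⟫) atTop
        (𝓝 (∫ x in Ω, ⟪Vlim x, W x⟫))) :
    ∫⁻ x in Ω, ENNReal.ofReal (Φ (Vlim x)) ≤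
      liminf (fun h => ∫⁻ x in Ω, ENNReal.ofReal (Φ (V h x))) atTop :=
  lintegral_liminf_of_weak_convergence_general Ω hΩb Φ hΦ hdiff V Vlim hV hVlim hweak
end
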